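/- arXiv:2211.01907 — 9 statements merged into one kernel-verified Lean document; each statement's English description precedes it below -/
import Mathlib

section
/- Let (f,p) be a DSIC one-player mechanism for m items, and define the allocation-network arc length ℓ(a,a') = inf{θ·a' − θ·a : θ ∈ R_{a'}} for allocations a, a' ∈ {0,1}^m. Let a^(1), a^(2), …, a^(k) ∈ {0,1}^m with a^(k) = a^(1) be a cyclic sequence of allocations such that for each j ∈ {1,…,k−1} the sets R_{a^(j)} and R_{a^(j+1)} are nonempty and Q_{a^(j)} ∩ Q_{a^(j+1)} ≠ ∅. Then the total length of the cycle is zero: Σ_{j=1}^{k−1} ℓ(a^(j), a^(j+1)) = 0. -/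
/-- In a DSIC one-player mechanism, any cycle of allocations whose
consecutive difference sets intersect has total allocation-network length zero. -/
theorem cycle_length_zero {m : ℕ}
    (f : (Fin m → ℝ) → (Fin m → ℝ)) (p : (Fin m → ℝ) → ℝ)
    (hf01 : ∀ θ i, f θ i = 0 ∨ f θ i = 1)
    (hDSIC : ∀ θ θ' : Fin m → ℝ,
      (∑ i, θ i * f θ i) - p θ ≥ (∑ i, θ i * f θ' i) - p θ')
    (k : ℕ) (hk : 1 ≤ k)
    (a : ℕ → (Fin m → ℝ))
    (ha01 : ∀ j, j ≤ k → ∀ i, a j i = 0 ∨ a j i = 1)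
    (hcyc : a k = a 1)
    (hRne : ∀ j, 1 ≤ j → j ≤ k - 1 →
      {θ : Fin m → ℝ | f θ = a j}.Nonempty ∧ {θ : Fin m → ℝ | f θ = a (j + 1)}.Nonempty)
    (hQ : ∀ j, 1 ≤ j → j ≤ k - 1 →
      (closure {θ : Fin m → ℝ | f θ = a j} ∩
        closure {θ : Fin m → ℝ | f θ = a (j + 1)}).Nonempty) :
    ∑ j ∈ Finset.Icc 1 (k - 1),
      sInf {x : ℝ | ∃ θ : Fin m → ℝ, f θ = a (j + 1) ∧
        x = (∑ i, θ i * a (j + 1) i) - ∑ i, θ i * a j i} = 0 := by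
  classical
  -- taxation principle
  have tax : ∀ θ θ' : Fin m → ℝ, f θ = f θ' → p θ = p θ' := by
    intro θ θ' h
    have h1 := hDSIC θ θ'
    have h2 := hDSIC θ' θ
    rw [h] at h1
    rw [h] at h2
    linarith
  set P : (Fin m → ℝ) → ℝ := fun b =>
    if h : ∃ θ, f θ = b then p h.choose else 0 with hP
  have Pspec : ∀ θ, P (f θ) = p θ := by
    intro θ
    have hex : ∃ θ', f θ' = f θ := ⟨θ, rfl⟩
    simp only [hP, dif_pos hex]
    exact tax hex.choose θ hex.choose_spec
  -- each term equals the payment difference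
  have key : ∀ j, 1 ≤ j → j ≤ k - 1 →
      sInf {x : ℝ | ∃ θ : Fin m → ℝ, f θ = a (j + 1) ∧
        x = (∑ i, θ i * a (j + 1) i) - ∑ i, θ i * a j i}
      = P (a (j + 1)) - P (a j) := by
    intro j hj1 hj2
    obtain ⟨⟨θj, hθj⟩, ⟨θj1, hθj1⟩⟩ := hRne j hj1 hj2
    have hPj : P (a j) = p θj := by rw [← hθj]; exact Pspec θj
    have hPj1 : P (a (j + 1)) = p θj1 := by rw [← hθj1]; exact Pspec θj1
    set g : (Fin m → ℝ) → ℝ :=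
      fun θ => (∑ i, θ i * a (j + 1) i) - ∑ i, θ i * a j i with hg
    have hgcont : Continuous g := by
      apply Continuous.sub <;>
        exact continuous_finset_sum _ fun i _ => (continuous_apply i).mul continuous_const
    set S : Set ℝ := {x : ℝ | ∃ θ : Fin m → ℝ, f θ = a (j + 1) ∧ x = g θ} with hS
    have hSne : S.Nonempty := ⟨g θj1, θj1, hθj1, rfl⟩
    -- lower bound
    have lb : ∀ x ∈ S, P (a (j + 1)) - P (a j) ≤ x := by
      rintro x ⟨θ, hθ, rfl⟩
      have h1 := hDSIC θ θj
      rw [hθ, hθj] at h1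
      have hpθ : p θ = P (a (j + 1)) := by rw [← hθ]; exact (Pspec θ).symm
      simp only [hg]
      rw [hpθ, ← hPj] at h1
      linarith
    have hbdd : BddBelow S := ⟨P (a (j + 1)) - P (a j), lb⟩
    -- the boundary point
    obtain ⟨θs, hθs1, hθs2⟩ := hQ j hj1 hj2
    -- g ≥ Pdiff on closure R_{a(j+1)}
    have hge : P (a (j + 1)) - P (a j) ≤ g θs := by
      have hclosed : IsClosed {θ : Fin m → ℝ | P (a (j + 1)) - P (a j) ≤ g θ} :=
        isClosed_le continuous_const hgcont
      have hsub : {θ : Fin m → ℝ | f θ = a (j + 1)} ⊆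
          {θ : Fin m → ℝ | P (a (j + 1)) - P (a j) ≤ g θ} := by
        intro θ hθ
        exact lb (g θ) ⟨θ, hθ, rfl⟩
      exact hclosed.closure_subset ((closure_mono hsub) hθs2)
    -- g ≤ Pdiff on closure R_{a j}
    have hle : g θs ≤ P (a (j + 1)) - P (a j) := by
      have hclosed : IsClosed {θ : Fin m → ℝ | g θ ≤ P (a (j + 1)) - P (a j)} :=
        isClosed_le hgcont continuous_const
      have hsub : {θ : Fin m → ℝ | f θ = a j} ⊆
          {θ : Fin m → ℝ | g θ ≤ P (a (j + 1)) - P (a j)} := by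
        intro θ hθ
        simp only [Set.mem_setOf_eq] at hθ ⊢
        have h1 := hDSIC θ θj1
        rw [hθ, hθj1] at h1
        have hpθ : p θ = P (a j) := by rw [← hθ]; exact (Pspec θ).symm
        rw [hpθ, ← hPj1] at h1
        simp only [hg]
        linarith
      exact hclosed.closure_subset ((closure_mono hsub) hθs1)
    have hgθs : g θs = P (a (j + 1)) - P (a j) := le_antisymm hle hge
    -- g θs is in the closure of S
    have hmem : g θs ∈ closure S := by
      have himg : S = g '' {θ : Fin m → ℝ | f θ = a (j + 1)} := by
        ext x
        constructor
        · rintro ⟨θ, hθ, rfl⟩; exact ⟨θ, hθ, rfl⟩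
        · rintro ⟨θ, hθ, rfl⟩; exact ⟨θ, hθ, rfl⟩
      rw [himg]
      exact image_closure_subset_closure_image hgcont (Set.mem_image_of_mem g hθs2)
    -- conclude
    apply le_antisymm
    · rw [← hgθs]
      refine (Real.sInf_le_iff hbdd hSne).2 ?_
      intro ε hε
      obtain ⟨x, hxS, hxd⟩ := Metric.mem_closure_iff.1 hmem ε hε
      refine ⟨x, hxS, ?_⟩
      have := abs_lt.1 (by simpa [Real.dist_eq] using hxd)
      linarith [this.2]
    · exact le_csInf hSne lb
  rw [Finset.sum_congr rfl fun j hj => by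
    obtain ⟨h1, h2⟩ := Finset.mem_Icc.1 hj
    exact key j h1 h2]
  -- telescoping
  have hIcc : Finset.Icc 1 (k - 1) = Finset.Ico 1 k := by
    rw [← Finset.Ico_add_one_right_eq_Icc]
    congr 1
    omega
  rw [hIcc, Finset.sum_Ico_eq_sum_range]
  have hk' : 1 + (k - 1) = k := by omega
  have htel : (∑ i ∈ Finset.range (k - 1), (P (a (1 + i + 1)) - P (a (1 + i))))
      = P (a (1 + (k - 1))) - P (a (1 + 0)) :=
    Finset.sum_range_sub (fun i => P (a (1 + i))) (k - 1)
  rw [htel, hk', hcyc]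
  norm_num
end

section
/- Let (f,p) be a DSIC one-player mechanism for m items, let a, b ∈ {0,1}^m be allocations, and let θ_a, θ_b ∈ ℝ^m satisfy f(θ_a) = a and f(θ_b) = b. If θ ∈ Q_a ∩ Q_b, then the utilities of the two allocations coincide at θ: θ·a − p(θ_a) = θ·b − p(θ_b). -/
/-- Auxiliary: on the region where f equals c, utility of c dominates utility of d. -/
lemma util_ge_on_region {m : ℕ}
    (f : (Fin m → ℝ) → (Fin m → ℝ)) (p : (Fin m → ℝ) → ℝ)
    (hDSIC : ∀ θ θ' : Fin m → ℝ,
      (∑ i, θ i * f θ i) - p θ ≥ (∑ i, θ i * f θ' i) - p θ')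
    (c d : Fin m → ℝ)
    (θc θd : Fin m → ℝ) (hθc : f θc = c) (hθd : f θd = d)
    (x : Fin m → ℝ) (hx : f x = c) :
    (∑ i, x i * c i) - p θc ≥ (∑ i, x i * d i) - p θd := by
  have h1 := hDSIC x θc
  have h2 := hDSIC θc x
  have h3 := hDSIC x θd
  simp only [hx, hθc, hθd] at h1 h2 h3
  -- h1 : ∑ x c - p x ≥ ∑ x c - p θc, so p x ≤ p θc
  -- h2 : ∑ θc c - p θc ≥ ∑ θc c - p x, so p θc ≤ p x
  have hpx : p x = p θc := by linarith
  linarith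

theorem closure_util_ge {m : ℕ}
    (f : (Fin m → ℝ) → (Fin m → ℝ)) (p : (Fin m → ℝ) → ℝ)
    (hDSIC : ∀ θ θ' : Fin m → ℝ,
      (∑ i, θ i * f θ i) - p θ ≥ (∑ i, θ i * f θ' i) - p θ')
    (c d : Fin m → ℝ)
    (θc θd : Fin m → ℝ) (hθc : f θc = c) (hθd : f θd = d)
    (θ : Fin m → ℝ) (hθ : θ ∈ closure {x : Fin m → ℝ | f x = c}) :
    (∑ i, θ i * c i) - p θc ≥ (∑ i, θ i * d i) - p θd := by
  have hcont1 : Continuous fun x : Fin m → ℝ => (∑ i, x i * d i) - p θd := by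
    continuity
  have hcont2 : Continuous fun x : Fin m → ℝ => (∑ i, x i * c i) - p θc := by
    continuity
  have hclosed : IsClosed {x : Fin m → ℝ |
      (∑ i, x i * d i) - p θd ≤ (∑ i, x i * c i) - p θc} :=
    isClosed_le hcont1 hcont2
  have hsub : {x : Fin m → ℝ | f x = c} ⊆ {x : Fin m → ℝ |
      (∑ i, x i * d i) - p θd ≤ (∑ i, x i * c i) - p θc} := by
    intro x hx
    exact util_ge_on_region f p hDSIC c d θc θd hθc hθd x hx
  exact closure_minimal hsub hclosed hθ

/-- In a DSIC one-player mechanism, at a type in the intersection of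
two difference sets, the utilities of the two allocations coincide. -/
theorem utilities_agree_on_intersection {m : ℕ}
    (f : (Fin m → ℝ) → (Fin m → ℝ)) (p : (Fin m → ℝ) → ℝ)
    (hf01 : ∀ θ i, f θ i = 0 ∨ f θ i = 1)
    (hDSIC : ∀ θ θ' : Fin m → ℝ,
      (∑ i, θ i * f θ i) - p θ ≥ (∑ i, θ i * f θ' i) - p θ')
    (a b : Fin m → ℝ)
    (ha01 : ∀ i, a i = 0 ∨ a i = 1) (hb01 : ∀ i, b i = 0 ∨ b i = 1)
    (θa θb : Fin m → ℝ) (hθa : f θa = a) (hθb : f θb = b)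
    (θ : Fin m → ℝ)
    (hθ : θ ∈ closure {x : Fin m → ℝ | f x = a} ∩ closure {x : Fin m → ℝ | f x = b}) :
    (∑ i, θ i * a i) - p θa = (∑ i, θ i * b i) - p θb := by
  have h1 := closure_util_ge f p hDSIC a b θa θb hθa hθb θ hθ.1
  have h2 := closure_util_ge f p hDSIC b a θb θa hθb hθa θ hθ.2
  linarith
end

section
/- Let (f,p) be a DSIC one-player mechanism for m items, define ℓ(a,a') = inf{θ·a' − θ·a : θ ∈ R_{a'}}, and let a, b ∈ {0,1}^m be allocations with R_a and R_b nonempty and Q_a ∩ Q_b ≠ ∅. Then for any θ_a ∈ R_a and θ_b ∈ R_b one has ℓ(a,b) = p(θ_b) − p(θ_a); that is, the arc length from a to b equals the difference of the (allocation-wise constant) payments. -/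
/-- In a DSIC one-player mechanism, if the difference sets of two
allocations `a` and `b` (with nonempty preimages) intersect, then the arc
length from `a` to `b` equals the difference of the payments. -/
theorem arc_length_eq_payment_difference {m : ℕ}
    (f : (Fin m → ℝ) → (Fin m → ℝ)) (p : (Fin m → ℝ) → ℝ)
    (hf01 : ∀ θ i, f θ i = 0 ∨ f θ i = 1)
    (hDSIC : ∀ θ θ' : Fin m → ℝ,
      (∑ i, θ i * f θ i) - p θ ≥ (∑ i, θ i * f θ' i) - p θ')
    (a b : Fin m → ℝ)
    (ha01 : ∀ i, a i = 0 ∨ a i = 1) (hb01 : ∀ i, b i = 0 ∨ b i = 1)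
    (hQ : (closure {x : Fin m → ℝ | f x = a} ∩
      closure {x : Fin m → ℝ | f x = b}).Nonempty)
    (θa θb : Fin m → ℝ) (hθa : f θa = a) (hθb : f θb = b) :
    sInf {x : ℝ | ∃ θ : Fin m → ℝ, f θ = b ∧
        x = (∑ i, θ i * b i) - ∑ i, θ i * a i} = p θb - p θa := by
  classical
  set g : (Fin m → ℝ) → ℝ := fun θ => (∑ i, θ i * b i) - ∑ i, θ i * a i with hg
  have hgc : Continuous g := by
    apply Continuous.sub <;> exact continuous_finset_sum _ fun i _ =>
      ((continuous_apply i).mul continuous_const)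
  set c := p θb - p θa with hc
  set S := {x : ℝ | ∃ θ : Fin m → ℝ, f θ = b ∧
      x = (∑ i, θ i * b i) - ∑ i, θ i * a i} with hSdef
  -- payments are constant on regions
  have hpay : ∀ θ θ' : Fin m → ℝ, f θ = f θ' → p θ = p θ' := by
    intro θ θ' h
    have h1 := hDSIC θ θ'
    have h2 := hDSIC θ' θ
    rw [h] at h1
    rw [h] at h2
    linarith
  -- every element of S is ≥ c
  have hlow : ∀ s ∈ S, c ≤ s := by
    rintro s ⟨θ, hθ, rfl⟩
    have h1 := hDSIC θ θa
    have hp : p θ = p θb := hpay θ θb (by rw [hθ, hθb])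
    rw [hθ, hθa] at h1
    simp only [hc]
    linarith
  have hne : S.Nonempty := ⟨g θb, θb, hθb, rfl⟩
  have hbdd : BddBelow S := ⟨c, hlow⟩
  obtain ⟨x, hxa, hxb⟩ := hQ
  -- g x ≤ c (from x ∈ closure R_a)
  have hgxle : g x ≤ c := by
    have hsub : {y : Fin m → ℝ | f y = a} ⊆ g ⁻¹' Set.Iic c := by
      rintro θ (hθ : f θ = a)
      have h1 := hDSIC θ θb
      have hp : p θ = p θa := hpay θ θa (by rw [hθ, hθa])
      rw [hθ, hθb] at h1
      simp only [Set.mem_preimage, Set.mem_Iic, hg, hc]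
      linarith
    have := closure_minimal hsub (isClosed_Iic.preimage hgc) hxa
    exact this
  -- g x ≥ c (from x ∈ closure R_b)
  have hgxge : c ≤ g x := by
    have hsub : {y : Fin m → ℝ | f y = b} ⊆ g ⁻¹' Set.Ici c := by
      rintro θ (hθ : f θ = b)
      exact hlow (g θ) ⟨θ, hθ, rfl⟩
    exact closure_minimal hsub (isClosed_Ici.preimage hgc) hxb
  have hgx : g x = c := le_antisymm hgxle hgxge
  -- g x ∈ closure S
  have hmem : g x ∈ closure S := by
    have himg : g '' {y : Fin m → ℝ | f y = b} ⊆ S := by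
      rintro s ⟨θ, hθ, rfl⟩
      exact ⟨θ, hθ, rfl⟩
    have : g x ∈ closure (g '' {y : Fin m → ℝ | f y = b}) :=
      image_closure_subset_closure_image hgc ⟨x, hxb, rfl⟩
    exact closure_mono himg this
  -- sInf S ≤ c
  have hle : sInf S ≤ c := by
    have hcl : closure S ⊆ Set.Ici (sInf S) :=
      closure_minimal (fun s hs => csInf_le hbdd hs) isClosed_Ici
    have := hcl hmem
    rw [hgx] at this
    exact this
  exact le_antisymm hle (le_csInf hne hlow)
end

section
/- Let (f,p) be a DSIC one-player mechanism for m items such that the allocation function f : ℝ^m → {0,1}^m is surjective. Then there exists a payment vector q : {0,1}^m → ℝ such that p(θ) = q(f(θ)) for all θ ∈ ℝ^m, and for every θ ∈ ℝ^m the allocation f(θ) is a maximizer at θ with respect to q, i.e., θ·f(θ) − q(f(θ)) ≥ θ·b − q(b) for all b ∈ {0,1}^m. -/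
/-- A DSIC one-player mechanism with surjective allocation function
arises from a payment vector `q` on allocations such that `f(θ)` always
maximizes `θ·a − q(a)`. -/
theorem DSIC_gives_payment_vector {m : ℕ}
    (f : (Fin m → ℝ) → (Fin m → Bool)) (p : (Fin m → ℝ) → ℝ)
    (hsurj : Function.Surjective f)
    (hDSIC : ∀ θ θ' : Fin m → ℝ,
      (∑ i, θ i * (if f θ i then 1 else 0)) - p θ ≥
      (∑ i, θ i * (if f θ' i then 1 else 0)) - p θ') :
    ∃ q : (Fin m → Bool) → ℝ,
      (∀ θ : Fin m → ℝ, p θ = q (f θ)) ∧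
      (∀ (θ : Fin m → ℝ) (b : Fin m → Bool),
        (∑ i, θ i * (if f θ i then 1 else 0)) - q (f θ) ≥
        (∑ i, θ i * (if b i then 1 else 0)) - q b) := by
  refine ⟨fun a => p (Function.surjInv hsurj a), ?_, ?_⟩
  · intro θ
    have hf : f (Function.surjInv hsurj (f θ)) = f θ :=
      Function.surjInv_eq hsurj (f θ)
    have h1 := hDSIC θ (Function.surjInv hsurj (f θ))
    have h2 := hDSIC (Function.surjInv hsurj (f θ)) θ
    rw [hf] at h1 h2
    linarith
  · intro θ b
    have hf : f (Function.surjInv hsurj b) = b := Function.surjInv_eq hsurj b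
    have hp : p θ = p (Function.surjInv hsurj (f θ)) := by
      have hf2 : f (Function.surjInv hsurj (f θ)) = f θ :=
        Function.surjInv_eq hsurj (f θ)
      have h1 := hDSIC θ (Function.surjInv hsurj (f θ))
      have h2 := hDSIC (Function.surjInv hsurj (f θ)) θ
      rw [hf2] at h1 h2
      linarith
    have h := hDSIC θ (Function.surjInv hsurj b)
    rw [hf] at h
    linarith
end

section
/- Let q : {0,1}^2 → ℝ be a payment vector for two items. Then there exists θ ∈ ℝ^2 at which both (0,0) and (1,1) are maximizers if and only if q(0,0) + q(1,1) ≤ q(0,1) + q(1,0); symmetrically, there exists θ ∈ ℝ^2 at which both (0,1) and (1,0) are maximizers if and only if q(0,1) + q(1,0) ≤ q(0,0) + q(1,1). Consequently, for every q at least one of the two diagonal ties occurs. -/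
lemma bool_vec_cases (P : (Fin 2 → Bool) → Prop)
    (h1 : P ![false,false]) (h2 : P ![false,true])
    (h3 : P ![true,false]) (h4 : P ![true,true]) : ∀ b, P b := by
  intro b
  have hb : b = ![b 0, b 1] := by
    funext i; fin_cases i <;> simp
  rw [hb]
  cases h0 : b 0 <;> cases h1' : b 1 <;> simpa using by assumption

/-- For two items, the diagonal tie `{(0,0),(1,1)}` occurs iff
`q(0,0)+q(1,1) ≤ q(0,1)+q(1,0)`, the anti-diagonal tie `{(0,1),(1,0)}` occurs
iff `q(0,1)+q(1,0) ≤ q(0,0)+q(1,1)`, and consequently at least one of the two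
diagonal ties always occurs. -/
theorem two_item_diagonal_ties
    (q : (Fin 2 → Bool) → ℝ) :
    ((∃ θ : Fin 2 → ℝ,
        (∀ b : Fin 2 → Bool,
          (∑ i, θ i * (if (![false, false]) i then 1 else 0)) - q ![false, false] ≥
          (∑ i, θ i * (if b i then 1 else 0)) - q b) ∧
        (∀ b : Fin 2 → Bool,
          (∑ i, θ i * (if (![true, true]) i then 1 else 0)) - q ![true, true] ≥
          (∑ i, θ i * (if b i then 1 else 0)) - q b)) ↔
      q ![false, false] + q ![true, true] ≤ q ![false, true] + q ![true, false]) ∧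
    ((∃ θ : Fin 2 → ℝ,
        (∀ b : Fin 2 → Bool,
          (∑ i, θ i * (if (![false, true]) i then 1 else 0)) - q ![false, true] ≥
          (∑ i, θ i * (if b i then 1 else 0)) - q b) ∧
        (∀ b : Fin 2 → Bool,
          (∑ i, θ i * (if (![true, false]) i then 1 else 0)) - q ![true, false] ≥
          (∑ i, θ i * (if b i then 1 else 0)) - q b)) ↔
      q ![false, true] + q ![true, false] ≤ q ![false, false] + q ![true, true]) ∧
    ((∃ θ : Fin 2 → ℝ,
        (∀ b : Fin 2 → Bool,
          (∑ i, θ i * (if (![false, false]) i then 1 else 0)) - q ![false, false] ≥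
          (∑ i, θ i * (if b i then 1 else 0)) - q b) ∧
        (∀ b : Fin 2 → Bool,
          (∑ i, θ i * (if (![true, true]) i then 1 else 0)) - q ![true, true] ≥
          (∑ i, θ i * (if b i then 1 else 0)) - q b)) ∨
      (∃ θ : Fin 2 → ℝ,
        (∀ b : Fin 2 → Bool,
          (∑ i, θ i * (if (![false, true]) i then 1 else 0)) - q ![false, true] ≥
          (∑ i, θ i * (if b i then 1 else 0)) - q b) ∧
        (∀ b : Fin 2 → Bool,
          (∑ i, θ i * (if (![true, false]) i then 1 else 0)) - q ![true, false] ≥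
          (∑ i, θ i * (if b i then 1 else 0)) - q b))) := by
  have hA : (∃ θ : Fin 2 → ℝ,
        (∀ b : Fin 2 → Bool,
          (∑ i, θ i * (if (![false, false]) i then 1 else 0)) - q ![false, false] ≥
          (∑ i, θ i * (if b i then 1 else 0)) - q b) ∧
        (∀ b : Fin 2 → Bool,
          (∑ i, θ i * (if (![true, true]) i then 1 else 0)) - q ![true, true] ≥
          (∑ i, θ i * (if b i then 1 else 0)) - q b)) ↔
      q ![false, false] + q ![true, true] ≤ q ![false, true] + q ![true, false] := by
    constructor
    · rintro ⟨θ, h0, h1⟩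
      have a1 := h0 ![true, true]
      have a2 := h1 ![false, false]
      have a3 := h0 ![false, true]
      have a4 := h0 ![true, false]
      simp [Fin.sum_univ_two] at a1 a2 a3 a4
      linarith
    · intro h
      refine ⟨![q ![true,false] - q ![false,false], q ![true,true] - q ![true,false]], ?_, ?_⟩ <;>
      · apply bool_vec_cases <;> simp [Fin.sum_univ_two] <;> linarith
  have hB : (∃ θ : Fin 2 → ℝ,
        (∀ b : Fin 2 → Bool,
          (∑ i, θ i * (if (![false, true]) i then 1 else 0)) - q ![false, true] ≥
          (∑ i, θ i * (if b i then 1 else 0)) - q b) ∧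
        (∀ b : Fin 2 → Bool,
          (∑ i, θ i * (if (![true, false]) i then 1 else 0)) - q ![true, false] ≥
          (∑ i, θ i * (if b i then 1 else 0)) - q b)) ↔
      q ![false, true] + q ![true, false] ≤ q ![false, false] + q ![true, true] := by
    constructor
    · rintro ⟨θ, h0, h1⟩
      have a1 := h0 ![false, false]
      have a2 := h1 ![true, true]
      simp [Fin.sum_univ_two] at a1 a2
      linarith
    · intro h
      refine ⟨![q ![true,false] - q ![false,false], q ![false,true] - q ![false,false]], ?_, ?_⟩ <;>
      · apply bool_vec_cases <;> simp [Fin.sum_univ_two] <;> linarith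
  refine ⟨hA, hB, ?_⟩
  rcases le_total (q ![false, false] + q ![true, true]) (q ![false, true] + q ![true, false]) with h | h
  · exact Or.inl (hA.mpr h)
  · exact Or.inr (hB.mpr h)
end

section
/- Let m ≥ 1 and define the payment vector q : {0,1}^m → ℝ by q(a) = (Σ_{i=1}^m a_i)². Then for every θ ∈ ℝ^m and every pair of allocations a, b ∈ {0,1}^m that are both maximizers at θ, the cardinalities of the allocated bundles differ by at most one: | |a|₁ − |b|₁ | ≤ 1. In particular, the cardinality sensitivity of DSIC one-player auctions on m items is at most 1. -/
private lemma sum_diff_single' {m : ℕ} (f g : Fin m → ℝ) (i : Fin m)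
    (h : ∀ j, j ≠ i → f j = g j) : ∑ j, f j = (∑ j, g j) + (f i - g i) := by
  have h1 : ∑ j, (f j - g j) = f i - g i :=
    Fintype.sum_eq_single i (fun j hj => by rw [h j hj]; ring)
  rw [Finset.sum_sub_distrib] at h1
  linarith

private lemma key_step {m : ℕ}
    (q : (Fin m → Bool) → ℝ)
    (hq : ∀ a : Fin m → Bool, q a = (∑ i, (if a i then (1 : ℝ) else 0)) ^ 2)
    (θ : Fin m → ℝ) (a b : Fin m → Bool)
    (hA : ∀ c : Fin m → Bool,
        (∑ i, θ i * (if a i then 1 else 0)) - q a ≥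
        (∑ i, θ i * (if c i then 1 else 0)) - q c)
    (hB : ∀ c : Fin m → Bool,
        (∑ i, θ i * (if b i then 1 else 0)) - q b ≥
        (∑ i, θ i * (if c i then 1 else 0)) - q c)
    (hgt : (∑ i, (if a i then (1 : ℝ) else 0)) > ∑ i, (if b i then (1 : ℝ) else 0)) :
    (∑ i, (if a i then (1 : ℝ) else 0)) ≤ (∑ i, (if b i then (1 : ℝ) else 0)) + 1 := by
  set na := ∑ i, (if a i then (1 : ℝ) else 0) with hna
  set nb := ∑ i, (if b i then (1 : ℝ) else 0) with hnb
  -- find an item in a but not in b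
  have hex : ∃ i, a i = true ∧ b i = false := by
    by_contra hno
    push_neg at hno
    have hle : na ≤ nb := by
      apply Finset.sum_le_sum
      intro i _
      by_cases hai : a i = true
      · have hbi : b i = true := by
          cases hb : b i
          · exact absurd hb (hno i hai)
          · rfl
        simp [hai, hbi]
      · simp [hai]
        positivity
    linarith
  obtain ⟨i, hai, hbi⟩ := hex
  -- remove i from a
  set c := Function.update a i false with hc
  have hcθ : ∑ j, θ j * (if c j then 1 else 0) =
      (∑ j, θ j * (if a j then 1 else 0)) + ((θ i * (if c i then 1 else 0)) - θ i * (if a i then 1 else 0)) := by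
    apply sum_diff_single'
    intro j hj
    simp [hc, Function.update_of_ne hj]
  have hccnt : ∑ j, (if c j then (1:ℝ) else 0) =
      na + (((if c i then (1:ℝ) else 0)) - (if a i then (1:ℝ) else 0)) := by
    apply sum_diff_single'
    intro j hj
    simp [hc, Function.update_of_ne hj]
  have hci : c i = false := by simp [hc]
  rw [hci, hai] at hcθ hccnt
  simp only [Bool.false_eq_true, if_false, reduceIte, mul_zero, mul_one, zero_sub] at hcθ hccnt
  have h1 := hA c
  rw [hq a, hq c, hccnt, hcθ, ← hna] at h1
  -- θ i ≥ 2 na - 1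
  have hθlb : θ i ≥ 2 * na - 1 := by nlinarith [h1]
  -- add i to b
  set d := Function.update b i true with hd
  have hdθ : ∑ j, θ j * (if d j then 1 else 0) =
      (∑ j, θ j * (if b j then 1 else 0)) + ((θ i * (if d i then 1 else 0)) - θ i * (if b i then 1 else 0)) := by
    apply sum_diff_single'
    intro j hj
    simp [hd, Function.update_of_ne hj]
  have hdcnt : ∑ j, (if d j then (1:ℝ) else 0) =
      nb + (((if d i then (1:ℝ) else 0)) - (if b i then (1:ℝ) else 0)) := by
    apply sum_diff_single'
    intro j hj
    simp [hd, Function.update_of_ne hj]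
  have hdi : d i = true := by simp [hd]
  rw [hdi, hbi] at hdθ hdcnt
  simp only [Bool.false_eq_true, if_false, reduceIte, mul_zero, mul_one, sub_zero] at hdθ hdcnt
  have h2 := hB d
  rw [hq b, hq d, hdcnt, hdθ, ← hnb] at h2
  have hθub : θ i ≤ 2 * nb + 1 := by nlinarith [h2]
  linarith

/-- With the payment vector `q(a) = |a|₁²`, any two allocations
that are tied maximizers at some type have bundle cardinalities differing by at
most one; hence the cardinality sensitivity of DSIC one-player auctions is at
most 1. -/
theorem cardinality_sensitivity_upper {m : ℕ} (hm : 1 ≤ m)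
    (q : (Fin m → Bool) → ℝ)
    (hq : ∀ a : Fin m → Bool, q a = (∑ i, (if a i then (1 : ℝ) else 0)) ^ 2) :
    ∀ (θ : Fin m → ℝ) (a b : Fin m → Bool),
      (∀ c : Fin m → Bool,
        (∑ i, θ i * (if a i then 1 else 0)) - q a ≥
        (∑ i, θ i * (if c i then 1 else 0)) - q c) →
      (∀ c : Fin m → Bool,
        (∑ i, θ i * (if b i then 1 else 0)) - q b ≥
        (∑ i, θ i * (if c i then 1 else 0)) - q c) →
      |(∑ i, (if a i then (1 : ℤ) else 0)) - ∑ i, (if b i then (1 : ℤ) else 0)| ≤ 1 := by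
  intro θ a b hA hB
  set A : ℤ := ∑ i, (if a i then (1 : ℤ) else 0) with hAdef
  set B : ℤ := ∑ i, (if b i then (1 : ℤ) else 0) with hBdef
  have hcastA : (∑ i, (if a i then (1 : ℝ) else 0)) = (A : ℝ) := by
    rw [hAdef]; push_cast; rfl
  have hcastB : (∑ i, (if b i then (1 : ℝ) else 0)) = (B : ℝ) := by
    rw [hBdef]; push_cast; rfl
  rw [abs_le]
  constructor
  · -- -1 ≤ A - B, i.e. B ≤ A + 1
    by_contra h
    push_neg at h
    have hgt : (∑ i, (if b i then (1 : ℝ) else 0)) > ∑ i, (if a i then (1 : ℝ) else 0) := by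
      rw [hcastA, hcastB]
      exact_mod_cast by linarith
    have := key_step q hq θ b a hB hA hgt
    rw [hcastA, hcastB] at this
    have : B ≤ A + 1 := by exact_mod_cast this
    omega
  · by_contra h
    push_neg at h
    have hgt : (∑ i, (if a i then (1 : ℝ) else 0)) > ∑ i, (if b i then (1 : ℝ) else 0) := by
      rw [hcastA, hcastB]
      exact_mod_cast by linarith
    have := key_step q hq θ a b hA hB hgt
    rw [hcastA, hcastB] at this
    have : A ≤ B + 1 := by exact_mod_cast this
    omega
end

section
/- Let m ≥ 3. For every payment vector q : {0,1}^m → ℝ there exist θ ∈ ℝ^m and allocations a, b ∈ {0,1}^m that are both maximizers at θ and satisfy Hd(a,b) ≥ 2. In particular, the Hamming sensitivity of DSIC one-player auctions on m ≥ 3 items is at least 2. -/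
open Finset

lemma aux_bound {m : ℕ} (i0 i1 : Fin m) (hne : i0 ≠ i1)
    (q : (Fin m → Bool) → ℝ) (x y : ℝ)
    (h1 : x - q (fun i => decide (i = i0)) ≤ -q (fun _ => false))
    (h2 : y - q (fun i => decide (i = i1)) ≤ -q (fun _ => false))
    (h3 : x + y - q (fun i => decide (i = i0) || decide (i = i1)) ≤ -q (fun _ => false)) :
    ∃ θ : Fin m → ℝ,
      (∀ c : Fin m → Bool, (∑ i, θ i * (if c i then 1 else 0)) - q c ≤ -q (fun _ => false)) ∧
      (∑ i, θ i * (if decide (i = i0) then (1:ℝ) else 0)) = x ∧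
      (∑ i, θ i * (if decide (i = i1) then (1:ℝ) else 0)) = y ∧
      (∑ i, θ i * (if (decide (i = i0) || decide (i = i1)) then (1:ℝ) else 0)) = x + y := by
  classical
  have hNE : (Finset.univ : Finset (Fin m → Bool)).Nonempty := univ_nonempty
  set Q : ℝ := Finset.univ.sup' hNE (fun c => |q c|) with hQ
  have hQc : ∀ c : Fin m → Bool, |q c| ≤ Q := fun c => Finset.le_sup' (fun c => |q c|) (mem_univ c)
  have hQ0 : 0 ≤ Q := le_trans (abs_nonneg _) (hQc (fun _ => false))
  set M : ℝ := |x| + |y| + Q + |q (fun _ => false)| with hM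
  have hM0 : 0 ≤ M := by positivity
  set θ : Fin m → ℝ := fun i => if i = i0 then x else if i = i1 then y else -M with hθ
  have hi1mem : i1 ∈ Finset.univ.erase i0 := by simp [hne.symm]
  have key : ∀ c : Fin m → Bool, (∑ i, θ i * (if c i then (1:ℝ) else 0))
      = x * (if c i0 then 1 else 0) + y * (if c i1 then 1 else 0)
        + ∑ i ∈ (Finset.univ.erase i0).erase i1, (-M) * (if c i then (1:ℝ) else 0) := by
    intro c
    have e1 : (∑ i, θ i * (if c i then (1:ℝ) else 0))
        = θ i0 * (if c i0 then 1 else 0) + ∑ i ∈ Finset.univ.erase i0, θ i * (if c i then (1:ℝ) else 0) :=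
      (Finset.add_sum_erase _ _ (mem_univ i0)).symm
    have e2 : (∑ i ∈ Finset.univ.erase i0, θ i * (if c i then (1:ℝ) else 0))
        = θ i1 * (if c i1 then 1 else 0) + ∑ i ∈ (Finset.univ.erase i0).erase i1, θ i * (if c i then (1:ℝ) else 0) :=
      (Finset.add_sum_erase _ _ hi1mem).symm
    have e3 : ∑ i ∈ (Finset.univ.erase i0).erase i1, θ i * (if c i then (1:ℝ) else 0)
        = ∑ i ∈ (Finset.univ.erase i0).erase i1, (-M) * (if c i then (1:ℝ) else 0) := by
      apply Finset.sum_congr rfl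
      intro i hi
      simp only [Finset.mem_erase] at hi
      simp [hθ, hi.1, hi.2.1]
    have t0 : θ i0 = x := by simp [hθ]
    have t1 : θ i1 = y := by simp [hθ, hne.symm]
    rw [e1, e2, e3, t0, t1, add_assoc]
  refine ⟨θ, ?_, ?_, ?_, ?_⟩
  · intro c
    by_cases hc : ∀ i, i ≠ i0 → i ≠ i1 → c i = false
    · -- c is one of the four canonical allocations
      have hcform : c = fun i => if i = i0 then c i0 else if i = i1 then c i1 else false := by
        funext i
        by_cases h0 : i = i0
        · simp [h0]
        · by_cases h1' : i = i1
          · simp [h0, h1', hne.symm]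
          · simp [h0, h1', hc i h0 h1']
      rcases Bool.eq_false_or_eq_true (c i0) with hb0 | hb0 <;>
        rcases Bool.eq_false_or_eq_true (c i1) with hb1 | hb1
      · have : c = fun i => decide (i = i0) || decide (i = i1) := by
          rw [hcform, hb0, hb1]; funext i
          by_cases h0 : i = i0 <;> by_cases h1' : i = i1 <;>
            simp [h0, h1', hne, hne.symm]
        subst this
        rw [key]
        have : (∑ i ∈ (Finset.univ.erase i0).erase i1, (-M) * (if (fun i => decide (i = i0) || decide (i = i1)) i then (1:ℝ) else 0)) = 0 := by
          apply Finset.sum_eq_zero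
          intro i hi
          simp only [Finset.mem_erase] at hi
          simp [hi.1, hi.2.1]
        rw [this]
        simp [hne, hne.symm]
        linarith [h3]
      · have : c = fun i => decide (i = i0) := by
          rw [hcform, hb0, hb1]; funext i
          by_cases h0 : i = i0 <;> by_cases h1' : i = i1 <;>
            simp [h0, h1', hne, hne.symm]
        subst this
        rw [key]
        have : (∑ i ∈ (Finset.univ.erase i0).erase i1, (-M) * (if (fun i => decide (i = i0)) i then (1:ℝ) else 0)) = 0 := by
          apply Finset.sum_eq_zero
          intro i hi
          simp only [Finset.mem_erase] at hi
          simp [hi.2.1]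
        rw [this]
        simp [hne, hne.symm]
        linarith [h1]
      · have : c = fun i => decide (i = i1) := by
          rw [hcform, hb0, hb1]; funext i
          by_cases h0 : i = i0 <;> by_cases h1' : i = i1 <;>
            simp [h0, h1', hne, hne.symm]
        subst this
        rw [key]
        have : (∑ i ∈ (Finset.univ.erase i0).erase i1, (-M) * (if (fun i => decide (i = i1)) i then (1:ℝ) else 0)) = 0 := by
          apply Finset.sum_eq_zero
          intro i hi
          simp only [Finset.mem_erase] at hi
          simp [hi.1]
        rw [this]
        simp only [decide_eq_true_eq]
        simp [hne, hne.symm]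
        linarith [h2]
      · have : c = fun _ => false := by
          rw [hcform, hb0, hb1]; funext i
          by_cases h0 : i = i0 <;> by_cases h1' : i = i1 <;> simp [h0, h1']
        subst this
        rw [key]
        simp
    · push_neg at hc
      obtain ⟨i2, h20, h21, h2t⟩ := hc
      have h2t' : c i2 = true := by
        cases h : c i2
        · exact absurd h h2t
        · rfl
      have hi2mem : i2 ∈ (Finset.univ.erase i0).erase i1 := by
        simp [h20, h21]
      have hsum : (∑ i ∈ (Finset.univ.erase i0).erase i1, (-M) * (if c i then (1:ℝ) else 0)) ≤ -M := by
        have : (∑ i ∈ (Finset.univ.erase i0).erase i1, (-M) * (if c i then (1:ℝ) else 0))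
            ≤ ∑ i ∈ (Finset.univ.erase i0).erase i1, (if i = i2 then -M else 0) := by
          apply Finset.sum_le_sum
          intro i hi
          by_cases h : i = i2
          · subst h; simp [h2t']
          · simp only [if_neg h]
            by_cases hci : c i = true
            · simp [hci]; linarith
            · simp [hci]
        calc _ ≤ _ := this
          _ = -M := by rw [Finset.sum_ite_eq' _ i2 (fun _ => -M)]; simp [hi2mem]
      have hx : x * (if c i0 then (1:ℝ) else 0) ≤ |x| := by
        by_cases h : c i0 = true
        · simpa [h] using le_abs_self x
        · simpa [h] using abs_nonneg x
      have hy : y * (if c i1 then (1:ℝ) else 0) ≤ |y| := by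
        by_cases h : c i1 = true
        · simpa [h] using le_abs_self y
        · simpa [h] using abs_nonneg y
      rw [key]
      have := hQc c
      have h1' := le_abs_self (q (fun _ => false))
      have h2' := neg_abs_le (q c)
      simp only [hM]
      linarith
  · rw [key]
    have : (∑ i ∈ (Finset.univ.erase i0).erase i1, (-M) * (if (fun i => decide (i = i0)) i then (1:ℝ) else 0)) = 0 := by
      apply Finset.sum_eq_zero
      intro i hi
      simp only [Finset.mem_erase] at hi
      simp [hi.2.1]
    rw [this]
    simp [hne, hne.symm]
  · rw [key]
    have : (∑ i ∈ (Finset.univ.erase i0).erase i1, (-M) * (if (fun i => decide (i = i1)) i then (1:ℝ) else 0)) = 0 := by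
      apply Finset.sum_eq_zero
      intro i hi
      simp only [Finset.mem_erase] at hi
      simp [hi.1]
    rw [this]
    simp [hne, hne.symm]
  · rw [key]
    have : (∑ i ∈ (Finset.univ.erase i0).erase i1, (-M) * (if (fun i => decide (i = i0) || decide (i = i1)) i then (1:ℝ) else 0)) = 0 := by
      apply Finset.sum_eq_zero
      intro i hi
      simp only [Finset.mem_erase] at hi
      simp [hi.1, hi.2.1]
    rw [this]
    simp [hne, hne.symm]

/-- For `m ≥ 3` items and every payment vector, some type admits
two tied maximizers at Hamming distance at least 2; hence the Hamming
sensitivity of DSIC one-player auctions is at least 2. -/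
theorem hamming_sensitivity_lower {m : ℕ} (hm : 3 ≤ m)
    (q : (Fin m → Bool) → ℝ) :
    ∃ (θ : Fin m → ℝ) (a b : Fin m → Bool),
      (∀ c : Fin m → Bool,
        (∑ i, θ i * (if a i then 1 else 0)) - q a ≥
        (∑ i, θ i * (if c i then 1 else 0)) - q c) ∧
      (∀ c : Fin m → Bool,
        (∑ i, θ i * (if b i then 1 else 0)) - q b ≥
        (∑ i, θ i * (if c i then 1 else 0)) - q c) ∧
      2 ≤ (Finset.univ.filter fun i => a i ≠ b i).card := by
  classical
  have hm0 : 0 < m := by omega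
  have hm1 : 1 < m := by omega
  set i0 : Fin m := ⟨0, hm0⟩ with hi0
  set i1 : Fin m := ⟨1, hm1⟩ with hi1
  have hne : i0 ≠ i1 := by simp [hi0, hi1, Fin.ext_iff]
  set z : Fin m → Bool := fun _ => false with hzdef
  set u : Fin m → Bool := fun i => decide (i = i0) with hudef
  set v : Fin m → Bool := fun i => decide (i = i1) with hvdef
  set w : Fin m → Bool := fun i => decide (i = i0) || decide (i = i1) with hwdef
  have hpair : ({i0, i1} : Finset (Fin m)).card = 2 := Finset.card_pair hne
  by_cases hcase : q w + q z ≤ q u + q v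
  · -- tie between z (empty) and w (both items)
    obtain ⟨θ, hall, hSu, hSv, hSw⟩ :=
      aux_bound i0 i1 hne q (q u - q z) (q w - q u)
        (by simp only [hudef, hvdef, hwdef, hzdef]; linarith) (by simp only [hudef, hvdef, hwdef, hzdef]; linarith) (by simp only [hudef, hvdef, hwdef, hzdef]; linarith)
    have hSz : (∑ i, θ i * (if z i then (1:ℝ) else 0)) = 0 := by
      simp [hzdef]
    refine ⟨θ, z, w, ?_, ?_, ?_⟩
    · intro c
      have := hall c
      rw [hSz]
      simp only [ge_iff_le]
      linarith
    · intro c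
      have := hall c
      have hw' : (∑ i, θ i * (if w i then (1:ℝ) else 0)) = (q u - q z) + (q w - q u) := hSw
      rw [hw']
      simp only [ge_iff_le]
      linarith
    · have hsub : ({i0, i1} : Finset (Fin m)) ⊆ Finset.univ.filter fun i => z i ≠ w i := by
        intro i hi
        simp only [Finset.mem_insert, Finset.mem_singleton] at hi
        rcases hi with rfl | rfl <;>
          simp [Finset.mem_filter, hzdef, hwdef]
      calc 2 = ({i0, i1} : Finset (Fin m)).card := hpair.symm
        _ ≤ _ := Finset.card_le_card hsub
  · -- tie between u = {i0} and v = {i1}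
    push_neg at hcase
    obtain ⟨θ, hall, hSu, hSv, hSw⟩ :=
      aux_bound i0 i1 hne q (q u - q z) (q v - q z)
        (by simp only [hudef, hvdef, hwdef, hzdef]; linarith) (by simp only [hudef, hvdef, hwdef, hzdef]; linarith) (by simp only [hudef, hvdef, hwdef, hzdef]; linarith)
    refine ⟨θ, u, v, ?_, ?_, ?_⟩
    · intro c
      have := hall c
      have hu' : (∑ i, θ i * (if u i then (1:ℝ) else 0)) = q u - q z := hSu
      rw [hu']
      simp only [ge_iff_le]
      linarith
    · intro c
      have := hall c
      have hv' : (∑ i, θ i * (if v i then (1:ℝ) else 0)) = q v - q z := hSv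
      rw [hv']
      simp only [ge_iff_le]
      linarith
    · have hsub : ({i0, i1} : Finset (Fin m)) ⊆ Finset.univ.filter fun i => u i ≠ v i := by
        intro i hi
        simp only [Finset.mem_insert, Finset.mem_singleton] at hi
        rcases hi with rfl | rfl <;>
          simp [Finset.mem_filter, hudef, hvdef, hne, hne.symm]
      calc 2 = ({i0, i1} : Finset (Fin m)).card := hpair.symm
        _ ≤ _ := Finset.card_le_card hsub
end

section
/- Let m ≥ 3 be odd and define the payment vector q : {0,1}^m → ℝ by q(a) = 0 if Σ_{i=1}^m a_i is even and q(a) = 1 if Σ_{i=1}^m a_i is odd. Then for every θ ∈ ℝ^m, no two allocations a, b ∈ {0,1}^m that are both maximizers at θ are antipodal, i.e., there is no maximizing pair with a + b equal to the all-ones vector (equivalently Hd(a,b) = m). -/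
open Finset

lemma sum_update_flip {m : ℕ} (θ : Fin m → ℝ) (b : Fin m → Bool) (i : Fin m) :
    ∑ j, θ j * (if Function.update b i (!b i) j then (1:ℝ) else 0) =
    (∑ j, θ j * (if b j then (1:ℝ) else 0)) + (if b i then -θ i else θ i) := by
  have h : ∀ j, θ j * (if Function.update b i (!b i) j then (1:ℝ) else 0)
      = θ j * (if b j then (1:ℝ) else 0) +
        (if j = i then (if b i then -θ i else θ i) else 0) := by
    intro j
    by_cases hj : j = i
    · subst hj
      cases hbi : b j <;> simp [hbi]
    · simp [Function.update_of_ne hj, hj]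
  simp_rw [h]
  rw [Finset.sum_add_distrib, Finset.sum_ite_eq' Finset.univ i]
  simp

lemma filter_update_flip {m : ℕ} (b : Fin m → Bool) (i : Fin m) :
    (Finset.univ.filter fun j => Function.update b i (!b i) j) =
    if b i then (Finset.univ.filter fun j => b j).erase i
      else insert i (Finset.univ.filter fun j => b j) := by
  cases hbi : b i <;>
    · ext j
      by_cases hj : j = i <;> simp [Function.update_apply, hj, hbi]

lemma parity_flip {m : ℕ} (b : Fin m → Bool) (i : Fin m) :
    Even (Finset.univ.filter fun j => Function.update b i (!b i) j).card ↔
    ¬ Even (Finset.univ.filter fun j => b j).card := by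
  rw [filter_update_flip]
  cases hbi : b i
  · rw [if_neg (by simp [hbi])]
    rw [Finset.card_insert_of_notMem (by simp [hbi])]
    simp [Nat.even_add_one]
  · rw [if_pos (by simp [hbi])]
    have hi : i ∈ Finset.univ.filter fun j => b j := by simp [hbi]
    have h1 := Finset.card_erase_add_one hi
    rw [← h1]
    simp [Nat.even_add_one]

lemma key_antipodal {m : ℕ} (hm : 3 ≤ m) (hodd : Odd m)
    (q : (Fin m → Bool) → ℝ)
    (hq : ∀ a : Fin m → Bool,
      q a = if Even (Finset.univ.filter fun i => a i).card then 0 else 1)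
    (θ : Fin m → ℝ) (a b : Fin m → Bool)
    (hab : ∀ i, b i = !a i)
    (hA : Even (Finset.univ.filter fun i => a i).card)
    (ha : ∀ c : Fin m → Bool,
        (∑ i, θ i * (if a i then 1 else 0)) - q a ≥
        (∑ i, θ i * (if c i then 1 else 0)) - q c)
    (hb : ∀ c : Fin m → Bool,
        (∑ i, θ i * (if b i then 1 else 0)) - q b ≥
        (∑ i, θ i * (if c i then 1 else 0)) - q c) :
    False := by
  classical
  set sa := Finset.univ.filter (fun i => a i) with hsa
  set sb := Finset.univ.filter (fun i => b i) with hsb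
  have hcompl : sb = saᶜ := by ext i; simp [hsa, hsb, hab i]
  have hcard : sa.card + sb.card = m := by
    rw [hcompl, Finset.card_add_card_compl]; simp
  have hB : ¬ Even sb.card := by
    intro hEb
    have : Even m := by rw [← hcard]; exact hA.add hEb
    exact (Nat.not_even_iff_odd.mpr hodd) this
  have hqa : q a = 0 := by rw [hq a, if_pos hA]
  have hqb : q b = 1 := by rw [hq b, if_neg hB]
  -- flip constraints from a's maximality
  have hflipa : ∀ i, (if a i then -θ i else θ i) ≤ 1 := by
    intro i
    have hqc : q (Function.update a i (!a i)) = 1 := by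
      rw [hq, if_neg]
      rw [parity_flip]
      exact not_not_intro hA
    have h := ha (Function.update a i (!a i))
    rw [sum_update_flip, hqc, hqa] at h
    linarith
  have hflipb : ∀ i, (if b i then -θ i else θ i) ≤ -1 := by
    intro i
    have hqc : q (Function.update b i (!b i)) = 0 := by
      rw [hq, if_pos]
      rw [parity_flip]
      exact hB
    have h := hb (Function.update b i (!b i))
    rw [sum_update_flip, hqc, hqb] at h
    linarith
  have hθ : ∀ i, θ i = if a i then -1 else 1 := by
    intro i
    have h1 := hflipa i
    have h2 := hflipb i
    rw [hab i] at h2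
    cases hai : a i <;> rw [hai] at h1 h2 <;> simp at h1 h2 ⊢ <;> linarith
  have hua : (∑ i, θ i * (if a i then (1:ℝ) else 0)) = -(sa.card : ℝ) := by
    have : ∀ i ∈ Finset.univ, θ i * (if a i then (1:ℝ) else 0)
        = if a i then (-1 : ℝ) else 0 := by
      intro i _
      rw [hθ i]; cases hai : a i <;> simp [hai]
    rw [Finset.sum_congr rfl this, ← Finset.sum_filter, ← hsa,
      Finset.sum_const]
    simp
  have hub : (∑ i, θ i * (if b i then (1:ℝ) else 0)) = (sb.card : ℝ) := by
    have : ∀ i ∈ Finset.univ, θ i * (if b i then (1:ℝ) else 0)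
        = if b i then (1 : ℝ) else 0 := by
      intro i _
      rw [hθ i, hab i]; cases hai : a i <;> simp [hai]
    rw [Finset.sum_congr rfl this, ← Finset.sum_filter, ← hsb,
      Finset.sum_const]
    simp
  have e1 := ha b
  have e2 := hb a
  rw [hua, hub, hqa, hqb] at e1 e2
  have hm' : (3:ℝ) ≤ (m:ℝ) := by exact_mod_cast hm
  have hcard' : (sa.card : ℝ) + (sb.card : ℝ) = (m:ℝ) := by exact_mod_cast hcard
  linarith

/-- For odd `m ≥ 3`, with the payment vector assigning `0` to
allocations of even cardinality and `1` to allocations of odd cardinality, no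
type admits two tied maximizers that are antipodal vertices of the cube. -/
theorem no_antipodal_ties {m : ℕ} (hm : 3 ≤ m) (hodd : Odd m)
    (q : (Fin m → Bool) → ℝ)
    (hq : ∀ a : Fin m → Bool,
      q a = if Even (Finset.univ.filter fun i => a i).card then 0 else 1) :
    ∀ (θ : Fin m → ℝ) (a b : Fin m → Bool),
      (∀ c : Fin m → Bool,
        (∑ i, θ i * (if a i then 1 else 0)) - q a ≥
        (∑ i, θ i * (if c i then 1 else 0)) - q c) →
      (∀ c : Fin m → Bool,
        (∑ i, θ i * (if b i then 1 else 0)) - q b ≥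
        (∑ i, θ i * (if c i then 1 else 0)) - q c) →
      (Finset.univ.filter fun i => a i ≠ b i).card ≠ m := by
  intro θ a b ha hb hcm
  have huniv : (Finset.univ.filter fun i => a i ≠ b i) = Finset.univ :=
    Finset.eq_univ_of_card _ (by simpa using hcm)
  have hne : ∀ i, a i ≠ b i := by
    intro i
    have hmem := Finset.mem_univ i
    rw [← huniv, Finset.mem_filter] at hmem
    exact hmem.2
  have hab : ∀ i, b i = !a i := by
    intro i
    have := hne i
    cases hai : a i <;> cases hbi : b i <;> simp_all
  have hba : ∀ i, a i = !b i := by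
    intro i; rw [hab i]; simp
  have hcompl : (Finset.univ.filter fun i => b i) =
      (Finset.univ.filter fun i => a i)ᶜ := by
    ext i; simp [hab i]
  have hsum : (Finset.univ.filter fun i => a i).card +
      (Finset.univ.filter fun i => b i).card = m := by
    rw [hcompl, Finset.card_add_card_compl]; simp
  rcases Nat.even_or_odd (Finset.univ.filter fun i => a i).card with hA | hO
  · exact key_antipodal hm hodd q hq θ a b hab hA ha hb
  · have hB : Even (Finset.univ.filter fun i => b i).card := by
      rw [Nat.even_iff]
      rw [Nat.odd_iff] at hodd hO
      omega
    exact key_antipodal hm hodd q hq θ b a hba hB hb ha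
end

section
/- Let n, m ≥ 1 and consider the affine maximizer with all player weights equal to 1 and allocation constants c_A = −(max_{j ∈ [n]} Σ_{i=1}^m A_{ij})² for A ∈ Ω. Then for every type profile θ = (θ_1, …, θ_n) ∈ (ℝ^m)^n and every pair of allocations A, B ∈ Ω that both maximize c_X + Σ_{j=1}^n θ_j · X_j over X ∈ Ω, one has | Σ_{i=1}^m A_{ij} − Σ_{i=1}^m B_{ij} | ≤ ⌈m/2⌉ for every player j ∈ [n]. In particular, the cardinality sensitivity of affine maximizers for n players and m items is at most ⌈m/2⌉. -/
/-!
Suppose `|A_j| > |B_j| + ⌈m/2⌉` and pick an item `i ∈ A_j \ B_j`. Exchanging it between the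
two maximizers (`X := A` with `i` given to `B i`, `Y := B` with `i` given to `j`) leaves the total
welfare unchanged, so optimality of `A` and `B` gives `c X + c Y ≤ c A + c B`. Since
`2|A_j| ≥ m + 2`, the bundle `A_j` exceeds every other bundle of `A` by at least two, hence
`max |X| = |A_j| - 1`; and `max |Y|² ≤ max |B|² + 2|B_j| + 1`. With `c = -max²` this
forces `|A_j| ≤ |B_j| + 1`, a contradiction.
-/

open Finset Function

section Allocation

variable {ι κ : Type*} [Fintype ι]

theorem add_sum_update_comp [DecidableEq ι] {M : Type*} [AddCommMonoid M] (g : κ → ι → M)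
    (A : ι → κ) (i : ι) (p : κ) :
    ∑ i', g (update A i p i') i' + g (A i) i = ∑ i', g (A i') i' + g p i := by
  have hupd : (fun i' => g (update A i p i') i') = update (fun i' => g (A i') i') i (g p i) :=
    funext fun i' => apply_update (fun i' k => g k i') A i p i'
  rw [hupd, sum_update_of_mem (mem_univ i), ← add_sum_erase _ _ (mem_univ i),
    sdiff_singleton_eq_erase]
  ac_rfl

theorem add_update_le_add_of_maximizers [DecidableEq ι] (c : (ι → κ) → ℝ) (θ : κ → ι → ℝ)
    {A B : ι → κ}
    (hA : ∀ X, c X + ∑ i, θ (X i) i ≤ c A + ∑ i, θ (A i) i)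
    (hB : ∀ X, c X + ∑ i, θ (X i) i ≤ c B + ∑ i, θ (B i) i) (i : ι) :
    c (update A i (B i)) + c (update B i (A i)) ≤ c A + c B := by
  have hX := add_sum_update_comp θ A i (B i)
  have hY := add_sum_update_comp θ B i (A i)
  linarith [hA (update A i (B i)), hB (update B i (A i))]

variable [DecidableEq κ]

theorem sum_sum_mul_ite_eq [Fintype κ] (θ : κ → ι → ℝ) (X : ι → κ) :
    ∑ j, ∑ i, θ j i * (if X i = j then 1 else 0) = ∑ i, θ (X i) i := by
  rw [sum_comm]
  simp [mul_ite, eq_comm]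

def bundleCard (A : ι → κ) (j : κ) : ℕ := #{i | A i = j}

def maxBundleCard [Fintype κ] (A : ι → κ) : ℕ := univ.sup (bundleCard A)

theorem bundleCard_le_maxBundleCard [Fintype κ] (A : ι → κ) (j : κ) :
    bundleCard A j ≤ maxBundleCard A :=
  le_sup (mem_univ j)

theorem bundleCard_add_bundleCard_le (A : ι → κ) {j q : κ} (hqj : q ≠ j) :
    bundleCard A q + bundleCard A j ≤ Fintype.card ι := by
  rw [bundleCard, bundleCard, ← card_disjUnion]
  · exact card_le_univ _
  · exact disjoint_filter.mpr fun i _ hq hj => hqj (hq.symm.trans hj)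

theorem exists_apply_eq_and_ne_of_bundleCard_lt (A B : ι → κ) {j : κ}
    (h : bundleCard B j < bundleCard A j) : ∃ i, A i = j ∧ B i ≠ j := by
  by_contra! hAB
  exact h.not_ge (card_le_card fun i => by simpa using hAB i)

variable [DecidableEq ι]

theorem bundleCard_update_add (A : ι → κ) (i : ι) (p q : κ) :
    bundleCard (update A i p) q + (if A i = q then 1 else 0) =
      bundleCard A q + (if p = q then 1 else 0) := by
  simp only [bundleCard, card_filter]
  exact add_sum_update_comp (fun k _ => if k = q then 1 else 0) A i p

variable [Fintype κ]

theorem maxBundleCard_update_add_one_le (A : ι → κ) {i : ι} {j p : κ}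
    (hAi : A i = j) (hpj : p ≠ j) (hdom : ∀ q ≠ j, bundleCard A q + 2 ≤ bundleCard A j) :
    maxBundleCard (update A i p) + 1 ≤ bundleCard A j := by
  have hj := bundleCard_update_add A i p j
  simp only [hAi, hpj, if_true, if_false] at hj
  suffices maxBundleCard (update A i p) ≤ bundleCard A j - 1 by omega
  refine Finset.sup_le fun q _ => ?_
  have hq := bundleCard_update_add A i p q
  by_cases hqj : q = j
  · subst hqj; omega
  · have := hdom q hqj
    split_ifs at hq <;> omega

theorem maxBundleCard_update_sq_le (B : ι → κ) (i : ι) (p : κ) :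
    maxBundleCard (update B i p) ^ 2 ≤ maxBundleCard B ^ 2 + 2 * bundleCard B p + 1 := by
  have hle : maxBundleCard (update B i p) ≤ max (maxBundleCard B) (bundleCard B p + 1) := by
    refine Finset.sup_le fun q _ => ?_
    have hq := bundleCard_update_add B i p q
    have := bundleCard_le_maxBundleCard B q
    by_cases hpq : p = q
    · subst hpq; split_ifs at hq <;> omega
    · split_ifs at hq <;> omega
  have hb := bundleCard_le_maxBundleCard B p
  rcases le_total (maxBundleCard B) (bundleCard B p + 1) with h | h
  · rw [max_eq_right h] at hle
    nlinarith
  · rw [max_eq_left h] at hle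
    nlinarith

theorem bundleCard_le_add_of_maximizers (θ : κ → ι → ℝ) {A B : ι → κ}
    (hA : ∀ X, -(maxBundleCard X : ℝ) ^ 2 + ∑ i, θ (X i) i ≤
      -(maxBundleCard A : ℝ) ^ 2 + ∑ i, θ (A i) i)
    (hB : ∀ X, -(maxBundleCard X : ℝ) ^ 2 + ∑ i, θ (X i) i ≤
      -(maxBundleCard B : ℝ) ^ 2 + ∑ i, θ (B i) i) (j : κ) :
    bundleCard A j ≤ bundleCard B j + (Fintype.card ι + 1) / 2 := by
  by_contra! hlt
  have hAm : bundleCard A j ≤ Fintype.card ι := card_le_univ _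
  obtain ⟨i, hAi, hBi⟩ := exists_apply_eq_and_ne_of_bundleCard_lt A B (j := j) (by omega)
  have hdom : ∀ q ≠ j, bundleCard A q + 2 ≤ bundleCard A j := fun q hqj => by
    have := bundleCard_add_bundleCard_le A hqj
    omega
  have hX := maxBundleCard_update_add_one_le A hAi hBi hdom
  have hY := maxBundleCard_update_sq_le B i j
  have hA_le := bundleCard_le_maxBundleCard A j
  have hexch : maxBundleCard A ^ 2 + maxBundleCard B ^ 2 ≤
      maxBundleCard (update A i (B i)) ^ 2 + maxBundleCard (update B i j) ^ 2 := by
    have := add_update_le_add_of_maximizers (fun X => -(maxBundleCard X : ℝ) ^ 2) θ hA hB i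
    rw [hAi] at this
    rw [← Nat.cast_le (α := ℝ)]
    push_cast
    linarith
  have hab : bundleCard B j + 2 ≤ bundleCard A j := by omega
  -- `a² ≤ maxBundleCard A ² ≤ (a - 1)² + 2b + 1` forces `a ≤ b + 1`.
  nlinarith

end Allocation

theorem affine_maximizer_cardinality_sensitivity_general {n m : ℕ}
    (c : (Fin m → Fin n) → ℝ)
    (hc : ∀ A : Fin m → Fin n,
      c A = -((((Finset.univ.sup fun j : Fin n =>
        (Finset.univ.filter fun i => A i = j).card) : ℕ) : ℝ)) ^ 2) :
    ∀ (θ : Fin n → Fin m → ℝ) (A B : Fin m → Fin n),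
      (∀ X : Fin m → Fin n,
        c A + ∑ j, ∑ i, θ j i * (if A i = j then 1 else 0) ≥
        c X + ∑ j, ∑ i, θ j i * (if X i = j then 1 else 0)) →
      (∀ X : Fin m → Fin n,
        c B + ∑ j, ∑ i, θ j i * (if B i = j then 1 else 0) ≥
        c X + ∑ j, ∑ i, θ j i * (if X i = j then 1 else 0)) →
      ∀ j : Fin n,
        |((Finset.univ.filter fun i => A i = j).card : ℤ) -
          ((Finset.univ.filter fun i => B i = j).card : ℤ)| ≤ (((m + 1) / 2 : ℕ) : ℤ) := by
  intro θ A B hA hB j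
  have hc' : c = fun X => -(maxBundleCard X : ℝ) ^ 2 := funext hc
  simp only [ge_iff_le, sum_sum_mul_ite_eq, hc'] at hA hB
  have hAB := bundleCard_le_add_of_maximizers θ hA hB j
  have hBA := bundleCard_le_add_of_maximizers θ hB hA j
  rw [Fintype.card_fin] at hAB hBA
  rw [abs_sub_le_iff]
  unfold bundleCard at hAB hBA
  omega

/-- For the affine maximizer with unit player weights and
allocation constants `c_A = −(max_j |A_j|)²`, any two tied maximizing
allocations give each player bundles whose cardinalities differ by at most
`⌈m/2⌉`. Allocations are encoded as `A : Fin m → Fin n`. -/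
theorem affine_maximizer_cardinality_sensitivity {n m : ℕ} (hn : 1 ≤ n) (hm : 1 ≤ m)
    (c : (Fin m → Fin n) → ℝ)
    (hc : ∀ A : Fin m → Fin n,
      c A = -((((Finset.univ.sup fun j : Fin n =>
        (Finset.univ.filter fun i => A i = j).card) : ℕ) : ℝ)) ^ 2) :
    ∀ (θ : Fin n → Fin m → ℝ) (A B : Fin m → Fin n),
      (∀ X : Fin m → Fin n,
        c A + ∑ j, ∑ i, θ j i * (if A i = j then 1 else 0) ≥
        c X + ∑ j, ∑ i, θ j i * (if X i = j then 1 else 0)) →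
      (∀ X : Fin m → Fin n,
        c B + ∑ j, ∑ i, θ j i * (if B i = j then 1 else 0) ≥
        c X + ∑ j, ∑ i, θ j i * (if X i = j then 1 else 0)) →
      ∀ j : Fin n,
        |((Finset.univ.filter fun i => A i = j).card : ℤ) -
          ((Finset.univ.filter fun i => B i = j).card : ℤ)| ≤ (((m + 1) / 2 : ℕ) : ℤ) :=
  affine_maximizer_cardinality_sensitivity_general c hc
end
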